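/- (The Schur complement is at least as well conditioned as the original matrix.) Let the symmetric real block matrix A_full = fromBlocks A B Bᵀ D be positive definite, with A of size m×m and D of size n×n, and let S = A - B * D⁻¹ * Bᵀ. Then for every u ∈ ℝ^m, λ_min(A_full) * ‖u‖² ≤ uᵀ S u ≤ λ_max(A_full) * ‖u‖², where λ_min(A_full) and λ_max(A_full) are the smallest and largest eigenvalues of A_full and ‖·‖ is the Euclidean norm; consequently λ_max(S)/λ_min(S) ≤ λ_max(A_full)/λ_min(A_full). -/

import Mathlib

/-! Write `M = fromBlocks A B Bᵀ D`. For `w = (u, -D⁻¹Bᵀu)` one has `wᵀ M w = uᵀ S u` and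
`‖u‖ ≤ ‖w‖`, which gives the lower bound; for `w = (u, 0)` one has `wᵀ M w = uᵀ A u ≥ uᵀ S u`
because `B D⁻¹ Bᵀ` is positive semidefinite, which gives the upper one. Since a bound
`r ‖x‖² ≤ xᵀ S x` holds for all `x` exactly when `r` lies below the spectrum of `S` (and dually
above), the spectrum of `S` lies in `[λ_min(M), λ_max(M)]`, which bounds its condition number. -/

open Matrix

open scoped ComplexOrder MatrixOrder

theorem sSup_div_sInf_le_div {s : Set ℝ} (hs : s.Nonempty) {a b : ℝ} (ha : 0 < a)
    (hab : s ⊆ Set.Icc a b) : sSup s / sInf s ≤ b / a := by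
  obtain ⟨x, hx⟩ := hs
  have hsup : sSup s ≤ b := csSup_le ⟨x, hx⟩ fun y hy ↦ (hab hy).2
  have hinf : a ≤ sInf s := le_csInf ⟨x, hx⟩ fun y hy ↦ (hab hy).1
  exact div_le_div₀ (ha.le.trans ((hab hx).1.trans (hab hx).2)) hsup ha hinf

namespace Matrix

namespace IsHermitian

variable {k : Type*} [Fintype k] [DecidableEq k] {M : Matrix k k ℝ}

theorem forall_mul_dotProduct_le_iff (hM : M.IsHermitian) (r : ℝ) :
    (∀ x : k → ℝ, r * (x ⬝ᵥ x) ≤ x ⬝ᵥ (M *ᵥ x)) ↔ ∀ μ ∈ spectrum ℝ M, r ≤ μ := by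
  rw [← algebraMap_le_iff_le_spectrum (a := M) hM.isSelfAdjoint, le_iff,
    Algebra.algebraMap_eq_smul_one, posSemidef_iff_dotProduct_mulVec,
    and_iff_right (hM.sub (isHermitian_one.smul (.all r)))]
  simp only [sub_mulVec, dotProduct_sub, smul_mulVec, one_mulVec, dotProduct_smul, star_trivial,
    sub_nonneg, smul_eq_mul]

theorem forall_dotProduct_le_mul_iff (hM : M.IsHermitian) (r : ℝ) :
    (∀ x : k → ℝ, x ⬝ᵥ (M *ᵥ x) ≤ r * (x ⬝ᵥ x)) ↔ ∀ μ ∈ spectrum ℝ M, μ ≤ r := by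
  rw [← le_algebraMap_iff_spectrum_le (a := M) hM.isSelfAdjoint, le_iff,
    Algebra.algebraMap_eq_smul_one, posSemidef_iff_dotProduct_mulVec,
    and_iff_right ((isHermitian_one.smul (.all r)).sub hM)]
  simp only [sub_mulVec, dotProduct_sub, smul_mulVec, one_mulVec, dotProduct_smul, star_trivial,
    sub_nonneg, smul_eq_mul]

theorem sInf_spectrum_mul_dotProduct_le (hM : M.IsHermitian) (x : k → ℝ) :
    sInf (spectrum ℝ M) * (x ⬝ᵥ x) ≤ x ⬝ᵥ (M *ᵥ x) :=
  (hM.forall_mul_dotProduct_le_iff _).2 (fun _ hμ ↦ csInf_le M.finite_spectrum.bddBelow hμ) x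

theorem dotProduct_le_sSup_spectrum_mul (hM : M.IsHermitian) (x : k → ℝ) :
    x ⬝ᵥ (M *ᵥ x) ≤ sSup (spectrum ℝ M) * (x ⬝ᵥ x) :=
  (hM.forall_dotProduct_le_mul_iff _).2 (fun _ hμ ↦ le_csSup M.finite_spectrum.bddAbove hμ) x

end IsHermitian

theorem PosDef.spectrum_pos {k 𝕜 : Type*} [Fintype k] [DecidableEq k] [RCLike 𝕜]
    {M : Matrix k k 𝕜} (hM : M.PosDef) : ∀ μ ∈ spectrum ℝ M, 0 < μ :=
  (StarOrderedRing.isStrictlyPositive_iff_spectrum_pos M hM.1.isSelfAdjoint).1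
    hM.isStrictlyPositive

theorem PosDef.of_fromBlocks₂₂ {m n R : Type*} [Fintype m] [Fintype n] [Ring R] [PartialOrder R]
    [StarRing R] {A : Matrix m m R} {B : Matrix m n R} {C : Matrix n m R} {D : Matrix n n R}
    (h : (fromBlocks A B C D).PosDef) : D.PosDef :=
  h.submatrix Sum.inr_injective

section SchurComplement

variable {m n : Type*} [Fintype m] [Fintype n] [DecidableEq n]
  {A : Matrix m m ℝ} {B : Matrix m n ℝ} {D : Matrix n n ℝ}

theorem dotProduct_fromBlocks_mulVec_eq_schur₂₂ (hD : D.IsHermitian) [Invertible D] (u : m → ℝ) :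
    Sum.elim u (-((D⁻¹ * Bᵀ) *ᵥ u)) ⬝ᵥ (fromBlocks A B Bᵀ D *ᵥ Sum.elim u (-((D⁻¹ * Bᵀ) *ᵥ u))) =
      u ⬝ᵥ ((A - B * D⁻¹ * Bᵀ) *ᵥ u) := by
  have h := schur_complement_eq₂₂ A B u (-((D⁻¹ * Bᵀ) *ᵥ u)) hD
  simp only [conjTranspose_eq_transpose_of_trivial, star_trivial, add_neg_cancel,
    dotProduct_zero, zero_add] at h
  rwa [dotProduct_mulVec, dotProduct_mulVec]

theorem sInf_spectrum_fromBlocks_mul_le_schur₂₂ [DecidableEq m]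
    (hpd : (fromBlocks A B Bᵀ D).PosDef) (u : m → ℝ) :
    sInf (spectrum ℝ (fromBlocks A B Bᵀ D)) * (u ⬝ᵥ u) ≤ u ⬝ᵥ ((A - B * D⁻¹ * Bᵀ) *ᵥ u) := by
  have hD := hpd.of_fromBlocks₂₂
  have := hD.isUnit.invertible
  set w := Sum.elim u (-((D⁻¹ * Bᵀ) *ᵥ u))
  have hmin : 0 ≤ sInf (spectrum ℝ (fromBlocks A B Bᵀ D)) :=
    Real.sInf_nonneg fun μ hμ ↦ (hpd.spectrum_pos μ hμ).le
  have hw : u ⬝ᵥ u ≤ w ⬝ᵥ w := by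
    rw [sumElim_dotProduct_sumElim]
    exact le_add_of_nonneg_right (dotProduct_self_star_nonneg _)
  calc sInf (spectrum ℝ (fromBlocks A B Bᵀ D)) * (u ⬝ᵥ u)
      ≤ sInf (spectrum ℝ (fromBlocks A B Bᵀ D)) * (w ⬝ᵥ w) := by gcongr
    _ ≤ w ⬝ᵥ (fromBlocks A B Bᵀ D *ᵥ w) := hpd.1.sInf_spectrum_mul_dotProduct_le w
    _ = u ⬝ᵥ ((A - B * D⁻¹ * Bᵀ) *ᵥ u) := dotProduct_fromBlocks_mulVec_eq_schur₂₂ hD.1 u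

theorem schur₂₂_le_sSup_spectrum_fromBlocks_mul [DecidableEq m]
    (hpd : (fromBlocks A B Bᵀ D).PosDef) (u : m → ℝ) :
    u ⬝ᵥ ((A - B * D⁻¹ * Bᵀ) *ᵥ u) ≤ sSup (spectrum ℝ (fromBlocks A B Bᵀ D)) * (u ⬝ᵥ u) := by
  have hBDB : 0 ≤ u ⬝ᵥ ((B * D⁻¹ * Bᵀ) *ᵥ u) := by
    simpa only [conjTranspose_eq_transpose_of_trivial, star_trivial] using
      (hpd.of_fromBlocks₂₂.inv.posSemidef.mul_mul_conjTranspose_same B).dotProduct_mulVec_nonneg u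
  have hA : u ⬝ᵥ (A *ᵥ u) =
      Sum.elim u 0 ⬝ᵥ (fromBlocks A B Bᵀ D *ᵥ Sum.elim u 0) := by
    simp [fromBlocks_mulVec, sumElim_dotProduct_sumElim]
  calc u ⬝ᵥ ((A - B * D⁻¹ * Bᵀ) *ᵥ u) ≤ u ⬝ᵥ (A *ᵥ u) := by
        rw [sub_mulVec, dotProduct_sub]; linarith
    _ ≤ sSup (spectrum ℝ (fromBlocks A B Bᵀ D)) * (Sum.elim u 0 ⬝ᵥ Sum.elim u 0) :=
        hA ▸ hpd.1.dotProduct_le_sSup_spectrum_mul _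
    _ = sSup (spectrum ℝ (fromBlocks A B Bᵀ D)) * (u ⬝ᵥ u) := by
        simp [sumElim_dotProduct_sumElim]

end SchurComplement

end Matrix

theorem schur_complement_condition_number_le_general {m n : Type*} [Fintype m] [Fintype n]
    [DecidableEq m] [DecidableEq n]
    (A : Matrix m m ℝ) (B : Matrix m n ℝ) (D : Matrix n n ℝ)
    (hpd : (fromBlocks A B Bᵀ D).PosDef) :
    (∀ u : m → ℝ,
      sInf (spectrum ℝ (fromBlocks A B Bᵀ D)) * (u ⬝ᵥ u) ≤
          u ⬝ᵥ ((A - B * D⁻¹ * Bᵀ) *ᵥ u) ∧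
        u ⬝ᵥ ((A - B * D⁻¹ * Bᵀ) *ᵥ u) ≤
          sSup (spectrum ℝ (fromBlocks A B Bᵀ D)) * (u ⬝ᵥ u)) ∧
    sSup (spectrum ℝ (A - B * D⁻¹ * Bᵀ)) / sInf (spectrum ℝ (A - B * D⁻¹ * Bᵀ)) ≤
      sSup (spectrum ℝ (fromBlocks A B Bᵀ D)) / sInf (spectrum ℝ (fromBlocks A B Bᵀ D)) := by
  have hbounds : ∀ u : m → ℝ, _ ∧ _ := fun u ↦
    ⟨sInf_spectrum_fromBlocks_mul_le_schur₂₂ hpd u, schur₂₂_le_sSup_spectrum_fromBlocks_mul hpd u⟩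
  refine ⟨hbounds, ?_⟩
  have hpos := hpd.spectrum_pos
  rcases isEmpty_or_nonempty m with hm | hm
  -- over an empty index type the spectrum of `S` is empty and `sSup ∅ = sInf ∅ = 0`
  · rw [spectrum.of_subsingleton, Real.sSup_empty, Real.sInf_empty, zero_div]
    exact div_nonneg (Real.sSup_nonneg fun μ hμ ↦ (hpos μ hμ).le)
      (Real.sInf_nonneg fun μ hμ ↦ (hpos μ hμ).le)
  · have hS : (A - B * D⁻¹ * Bᵀ).IsHermitian := by
      simpa only [conjTranspose_eq_transpose_of_trivial] using
        (IsHermitian.fromBlocks₂₂ A B hpd.of_fromBlocks₂₂.1).1 hpd.1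
    have hmin : 0 < sInf (spectrum ℝ (fromBlocks A B Bᵀ D)) :=
      hpos _ ((ContinuousFunctionalCalculus.spectrum_nonempty _ hpd.1.isSelfAdjoint).csInf_mem
        (finite_spectrum _))
    refine sSup_div_sInf_le_div (ContinuousFunctionalCalculus.spectrum_nonempty _ hS.isSelfAdjoint)
      hmin fun μ hμ ↦
      ⟨(hS.forall_mul_dotProduct_le_iff _).1 (fun u ↦ (hbounds u).1) μ hμ,
        (hS.forall_dotProduct_le_mul_iff _).1 (fun u ↦ (hbounds u).2) μ hμ⟩

/-- The Schur complement is at least as well conditioned as the original matrix: if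
`A_full = fromBlocks A B Bᵀ D` is symmetric positive definite and
`S = A - B * D⁻¹ * Bᵀ`, then `λ_min(A_full) ‖u‖² ≤ uᵀ S u ≤ λ_max(A_full) ‖u‖²` for
every `u`, and consequently `λ_max(S)/λ_min(S) ≤ λ_max(A_full)/λ_min(A_full)`
(extrema of the eigenvalues expressed through the spectrum). -/
theorem schur_complement_condition_number_le {m n : Type*} [Fintype m] [Fintype n]
    [DecidableEq m] [DecidableEq n]
    (A : Matrix m m ℝ) (B : Matrix m n ℝ) (D : Matrix n n ℝ)
    (hAsymm : A.IsSymm) (hDsymm : D.IsSymm)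
    (hpd : (fromBlocks A B Bᵀ D).PosDef) :
    (∀ u : m → ℝ,
      sInf (spectrum ℝ (fromBlocks A B Bᵀ D)) * (u ⬝ᵥ u) ≤
          u ⬝ᵥ ((A - B * D⁻¹ * Bᵀ) *ᵥ u) ∧
        u ⬝ᵥ ((A - B * D⁻¹ * Bᵀ) *ᵥ u) ≤
          sSup (spectrum ℝ (fromBlocks A B Bᵀ D)) * (u ⬝ᵥ u)) ∧
    sSup (spectrum ℝ (A - B * D⁻¹ * Bᵀ)) / sInf (spectrum ℝ (A - B * D⁻¹ * Bᵀ)) ≤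
      sSup (spectrum ℝ (fromBlocks A B Bᵀ D)) / sInf (spectrum ℝ (fromBlocks A B Bᵀ D)) :=
  schur_complement_condition_number_le_general A B D hpd
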